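/- arXiv:2002.05132 — 7 statements merged into one kernel-verified Lean document; each statement's English description precedes it below -/
import Mathlib

section
/- If y : Fin n → ℝ satisfies 0 < y i < π/2 for all i and the sum ∑ y i < π/2, then tan(∑ y i) ≥ ∑ tan(y i). -/
open Real Finset

private lemma tan_two_add (a b : ℝ) (ha : 0 ≤ a) (hb : 0 ≤ b) (hab : a + b < π / 2) :
    Real.tan a + Real.tan b ≤ Real.tan (a + b) := by
  have hpi := Real.pi_pos
  have ha2 : a < π / 2 := by linarith
  have hb2 : b < π / 2 := by linarith
  have hca : 0 < Real.cos a := Real.cos_pos_of_mem_Ioo ⟨by linarith, ha2⟩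
  have hcb : 0 < Real.cos b := Real.cos_pos_of_mem_Ioo ⟨by linarith, hb2⟩
  have hcab : 0 < Real.cos (a + b) := Real.cos_pos_of_mem_Ioo ⟨by linarith, hab⟩
  have hsa : 0 ≤ Real.sin a := Real.sin_nonneg_of_nonneg_of_le_pi ha (by linarith)
  have hsb : 0 ≤ Real.sin b := Real.sin_nonneg_of_nonneg_of_le_pi hb (by linarith)
  have hsab : 0 ≤ Real.sin (a + b) :=
    Real.sin_nonneg_of_nonneg_of_le_pi (by linarith) (by linarith)
  rw [Real.tan_eq_sin_div_cos, Real.tan_eq_sin_div_cos, Real.tan_eq_sin_div_cos,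
    div_add_div _ _ (ne_of_gt hca) (ne_of_gt hcb), div_le_div_iff₀ (mul_pos hca hcb) hcab]
  nlinarith [Real.sin_add a b, Real.cos_add a b, mul_nonneg (mul_nonneg hsab hsa) hsb]

private lemma tan_sum_le {n : ℕ} (y : Fin n → ℝ) (hy : ∀ i, 0 ≤ y i) (s : Finset (Fin n))
    (hs : ∑ i ∈ s, y i < π / 2) :
    ∑ i ∈ s, Real.tan (y i) ≤ Real.tan (∑ i ∈ s, y i) := by
  induction s using Finset.cons_induction with
  | empty => simp
  | cons a s ha ih =>
    rw [Finset.sum_cons, Finset.sum_cons] at *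
    have hnn : 0 ≤ ∑ i ∈ s, y i := Finset.sum_nonneg fun i _ => hy i
    have hs' : ∑ i ∈ s, y i < π / 2 := by linarith [hy a]
    calc Real.tan (y a) + ∑ i ∈ s, Real.tan (y i)
        ≤ Real.tan (y a) + Real.tan (∑ i ∈ s, y i) := by linarith [ih hs']
      _ ≤ Real.tan (y a + ∑ i ∈ s, y i) := tan_two_add _ _ (hy a) hnn hs

theorem tan_superadditive_small_angles (n : ℕ) (hn : 1 ≤ n) (y : Fin n → ℝ)
    (hy : ∀ i, 0 < y i ∧ y i < π / 2)
    (hsum : ∑ i, y i < π / 2) :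
    Real.tan (∑ i, y i) ≥ ∑ i, Real.tan (y i) := by
  exact tan_sum_le y (fun i => (hy i).1.le) Finset.univ hsum
end

section
/- If y : Fin n → ℝ satisfies 0 < y i < π/2 for i = 1,…,n-1, π/2 < y n < π, ∑_{i<n} y i < π/2, and π/2 < ∑_{i=1}^n y i < π, then tan(∑ y i) ≥ ∑ tan(y i). -/
open Real Finset

lemma aux_div_le (c x y : ℝ) (hc : 0 ≤ c) (hxy : x ≤ y) (hp : 0 < x * y) :
    c / y ≤ c / x := by
  have hx : x ≠ 0 := by rintro rfl; simp at hp
  have hy : y ≠ 0 := by rintro rfl; simp at hp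
  have h : c / x - c / y = c * (y - x) / (x * y) := by field_simp
  have h2 : 0 ≤ c * (y - x) / (x * y) :=
    div_nonneg (mul_nonneg hc (sub_nonneg.2 hxy)) hp.le
  linarith

lemma tan_add_ge (a b : ℝ) (hsa : 0 ≤ Real.sin a) (hsb : 0 ≤ Real.sin b)
    (hsab : 0 ≤ Real.sin (a + b))
    (hp : 0 < Real.cos (a + b) * (Real.cos a * Real.cos b)) :
    Real.tan a + Real.tan b ≤ Real.tan (a + b) := by
  have hca : Real.cos a ≠ 0 := by
    intro h; rw [h] at hp; simp at hp
  have hcb : Real.cos b ≠ 0 := by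
    intro h; rw [h] at hp; simp at hp
  have hsum : Real.tan a + Real.tan b = Real.sin (a + b) / (Real.cos a * Real.cos b) := by
    rw [Real.tan_eq_sin_div_cos, Real.tan_eq_sin_div_cos, Real.sin_add]
    field_simp
  rw [hsum, Real.tan_eq_sin_div_cos]
  apply aux_div_le _ _ _ hsab
  · have := Real.cos_add a b
    nlinarith [mul_nonneg hsa hsb]
  · nlinarith

lemma tan_superadd_small (m : ℕ) (y : Fin m → ℝ)
    (h : ∀ i, 0 ≤ y i ∧ y i < π / 2) (hs : ∑ i, y i < π / 2) :
    ∑ i, Real.tan (y i) ≤ Real.tan (∑ i, y i) := by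
  induction m with
  | zero => simp
  | succ m ih =>
    have hpi := Real.pi_pos
    set s := ∑ i : Fin m, y i.castSucc with hsdef
    have hlastnn : 0 ≤ y (Fin.last m) := (h _).1
    have htot : ∑ i, y i = s + y (Fin.last m) := Fin.sum_univ_castSucc y
    have hsnn : 0 ≤ s := Finset.sum_nonneg fun i _ => (h _).1
    have hslt : s < π / 2 := by
      rw [htot] at hs; linarith
    have hih : ∑ i : Fin m, Real.tan (y i.castSucc) ≤ Real.tan s :=
      ih (fun i => y i.castSucc) (fun i => h _) hslt
    have hb1 : 0 ≤ y (Fin.last m) := hlastnn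
    have hb2 : y (Fin.last m) < π / 2 := (h _).2
    have habs : s + y (Fin.last m) < π / 2 := by rw [htot] at hs; exact hs
    have hadd : Real.tan s + Real.tan (y (Fin.last m)) ≤ Real.tan (s + y (Fin.last m)) := by
      apply tan_add_ge
      · exact Real.sin_nonneg_of_nonneg_of_le_pi hsnn (by linarith)
      · exact Real.sin_nonneg_of_nonneg_of_le_pi hb1 (by linarith)
      · exact Real.sin_nonneg_of_nonneg_of_le_pi (by linarith) (by linarith)
      · have c1 : 0 < Real.cos s := Real.cos_pos_of_mem_Ioo ⟨by linarith, by linarith⟩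
        have c2 : 0 < Real.cos (y (Fin.last m)) :=
          Real.cos_pos_of_mem_Ioo ⟨by linarith, by linarith⟩
        have c3 : 0 < Real.cos (s + y (Fin.last m)) :=
          Real.cos_pos_of_mem_Ioo ⟨by linarith, by linarith⟩
        positivity
    calc ∑ i, Real.tan (y i)
        = ∑ i : Fin m, Real.tan (y i.castSucc) + Real.tan (y (Fin.last m)) :=
          Fin.sum_univ_castSucc fun i => Real.tan (y i)
      _ ≤ Real.tan s + Real.tan (y (Fin.last m)) := by linarith
      _ ≤ Real.tan (s + y (Fin.last m)) := hadd
      _ = Real.tan (∑ i, y i) := by rw [htot]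

theorem tan_superadditive_one_large_angle (n : ℕ) (hn : 1 ≤ n) (y : Fin (n + 1) → ℝ)
    (hsmall : ∀ i : Fin n, 0 < y i.castSucc ∧ y i.castSucc < π / 2)
    (hlast : π / 2 < y (Fin.last n) ∧ y (Fin.last n) < π)
    (hsum1 : ∑ i : Fin n, y i.castSucc < π / 2)
    (hsum2 : π / 2 < ∑ i, y i ∧ ∑ i, y i < π) :
    Real.tan (∑ i, y i) ≥ ∑ i, Real.tan (y i) := by
  have hpi := Real.pi_pos
  set s := ∑ i : Fin n, y i.castSucc with hsdef
  set L := y (Fin.last n) with hLdef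
  have htot : ∑ i, y i = s + L := Fin.sum_univ_castSucc y
  have hsnn : 0 ≤ s := Finset.sum_nonneg fun i _ => (hsmall _).1.le
  have hsmallsum : ∑ i : Fin n, Real.tan (y i.castSucc) ≤ Real.tan s :=
    tan_superadd_small n (fun i => y i.castSucc) (fun i => ⟨(hsmall i).1.le, (hsmall i).2⟩) hsum1
  have hadd : Real.tan s + Real.tan L ≤ Real.tan (s + L) := by
    apply tan_add_ge
    · exact Real.sin_nonneg_of_nonneg_of_le_pi hsnn (by linarith)
    · exact Real.sin_nonneg_of_nonneg_of_le_pi (by linarith [hlast.1]) hlast.2.le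
    · exact Real.sin_nonneg_of_nonneg_of_le_pi (by linarith [hlast.1])
        (by rw [← htot]; exact hsum2.2.le)
    · have c1 : 0 < Real.cos s := Real.cos_pos_of_mem_Ioo ⟨by linarith, by linarith⟩
      have c2 : Real.cos L < 0 :=
        Real.cos_neg_of_pi_div_two_lt_of_lt hlast.1 (by linarith [hlast.2])
      have c3 : Real.cos (s + L) < 0 := by
        rw [← htot]
        exact Real.cos_neg_of_pi_div_two_lt_of_lt hsum2.1 (by linarith [hsum2.2])
      exact mul_pos_of_neg_of_neg c3 (mul_neg_of_pos_of_neg c1 c2)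
  calc ∑ i, Real.tan (y i)
      = ∑ i : Fin n, Real.tan (y i.castSucc) + Real.tan L :=
        Fin.sum_univ_castSucc fun i => Real.tan (y i)
    _ ≤ Real.tan s + Real.tan L := by linarith
    _ ≤ Real.tan (s + L) := hadd
    _ = Real.tan (∑ i, y i) := by rw [htot]
end

section
/- Let λ : Fin n → ℝ with all λᵢ > 0 and T ≤ 0 satisfying 1 + T·∑ᵢ 1/λᵢ ≥ 0. Then for every subset I ⊆ {1,…,n}, the principal submatrix of M̃ = (T + δᵢⱼ λᵢ) indexed by I has nonnegative determinant, and hence M̃ is positive semidefinite. -/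
open Real Finset

lemma aux_psd {ι : Type*} [Fintype ι] [DecidableEq ι] (lam : ι → ℝ)
    (hlam : ∀ i, 0 < lam i) (T : ℝ) (hT : T ≤ 0)
    (h : 0 ≤ 1 + T * ∑ i, 1 / lam i) :
    (Matrix.of fun i j : ι => T + if i = j then lam i else 0).PosSemidef := by
  rw [Matrix.posSemidef_iff_dotProduct_mulVec]
  constructor
  · ext i j
    simp only [Matrix.conjTranspose_apply, Matrix.of_apply, star_trivial]
    by_cases hij : i = j <;> simp [hij, eq_comm]
  · intro x
    simp only [dotProduct, Matrix.mulVec, Matrix.of_apply, star_trivial,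
      RCLike.re_to_real]
    have key : ∑ i, x i * ∑ j, (T + if i = j then lam i else 0) * x j
        = T * (∑ i, x i) ^ 2 + ∑ i, lam i * x i ^ 2 := by
      have : ∀ i, x i * ∑ j, (T + if i = j then lam i else 0) * x j
          = T * (x i * ∑ j, x j) + lam i * x i ^ 2 := by
        intro i
        rw [Finset.sum_congr rfl (fun j _ => add_mul T _ (x j)), Finset.sum_add_distrib,
          ← Finset.mul_sum]
        simp only [ite_mul, zero_mul, Finset.sum_ite_eq, Finset.mem_univ, if_true]
        ring
      rw [Finset.sum_congr rfl (fun i _ => this i), Finset.sum_add_distrib, ← Finset.mul_sum,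
        ← Finset.sum_mul]
      ring
    rw [key]
    -- Cauchy-Schwarz
    have cs : (∑ i, x i) ^ 2 ≤ (∑ i, 1 / lam i) * ∑ i, lam i * x i ^ 2 := by
      have := Finset.sum_mul_sq_le_sq_mul_sq Finset.univ
        (fun i => Real.sqrt (1 / lam i)) (fun i => Real.sqrt (lam i) * x i)
      have e1 : ∀ i : ι, Real.sqrt (1 / lam i) * (Real.sqrt (lam i) * x i) = x i := by
        intro i
        have := hlam i
        rw [one_div, ← mul_assoc, ← Real.sqrt_mul (by positivity),
          inv_mul_cancel₀ (hlam i).ne', Real.sqrt_one, one_mul]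
      have e2 : ∀ i : ι, Real.sqrt (1 / lam i) ^ 2 = 1 / lam i := fun i =>
        Real.sq_sqrt (by have := hlam i; positivity)
      have e3 : ∀ i : ι, (Real.sqrt (lam i) * x i) ^ 2 = lam i * x i ^ 2 := by
        intro i
        rw [mul_pow, Real.sq_sqrt (hlam i).le]
      simpa only [e1, e2, e3] using this
    have hsum : 0 ≤ ∑ i, lam i * x i ^ 2 :=
      Finset.sum_nonneg fun i _ => by have := hlam i; positivity
    have : T * ((∑ i, 1 / lam i) * ∑ i, lam i * x i ^ 2) ≤ T * (∑ i, x i) ^ 2 :=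
      mul_le_mul_of_nonpos_left cs hT
    nlinarith

theorem posSemidef_T_nonpos (n : ℕ) (lam : Fin n → ℝ) (hlam : ∀ i, 0 < lam i)
    (T : ℝ) (hT : T ≤ 0) (h : 0 ≤ 1 + T * ∑ i, 1 / lam i) :
    (∀ I : Finset (Fin n),
      0 ≤ ((Matrix.of fun i j : Fin n => T + if i = j then lam i else 0).submatrix
        (fun i : I => (i : Fin n)) (fun i : I => (i : Fin n))).det) ∧
    (Matrix.of fun i j : Fin n => T + if i = j then lam i else 0).PosSemidef := by
  constructor
  · intro I
    have hsub : ((Matrix.of fun i j : Fin n => T + if i = j then lam i else 0).submatrix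
        (fun i : I => (i : Fin n)) (fun i : I => (i : Fin n)))
        = Matrix.of fun i j : I => T + if i = j then lam (i : Fin n) else 0 := by
      ext i j
      simp only [Matrix.submatrix_apply, Matrix.of_apply]
      congr 1
      by_cases hij : i = j
      · simp [hij]
      · rw [if_neg hij, if_neg (fun hc => hij (Subtype.ext hc))]
    rw [hsub]
    have hI : 0 ≤ 1 + T * ∑ i : I, 1 / lam (i : Fin n) := by
      have hle : ∑ i : I, 1 / lam (i : Fin n) ≤ ∑ i, 1 / lam i := by
        rw [Finset.sum_coe_sort I (fun i => 1 / lam i)]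
        exact Finset.sum_le_sum_of_subset_of_nonneg (Finset.subset_univ I)
          (fun i _ _ => by have := hlam i; positivity)
      nlinarith [mul_le_mul_of_nonpos_left hle hT]
    have hpsd := aux_psd (fun i : I => lam (i : Fin n)) (fun i => hlam _) T hT hI
    calc (0:ℝ) ≤ ∏ i : I, hpsd.1.eigenvalues i :=
          Finset.prod_nonneg fun i _ => hpsd.eigenvalues_nonneg i
      _ = _ := (hpsd.1.det_eq_prod_eigenvalues).symm
  · exact aux_psd lam hlam T hT h
end

section
/- Let θ(λ) = ∑ᵢ arctan(λᵢ) for λ : Fin n → ℝ with n ≥ 2, arranged so that λ₁ ≥ λ₂ ≥ … ≥ λₙ. If θ(λ) > (n-2)·π/2, then λᵢ > 0 for i = 1,…,n-1, and λ_{n-1} ≥ |λₙ|; in particular ∑ᵢ λᵢ > 0. -/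
open Real Finset

theorem supercritical_eigenvalue_structure (n : ℕ) (hn : 2 ≤ n) (lam : Fin n → ℝ)
    (hmono : Antitone lam)
    (h : ((n : ℝ) - 2) * (π / 2) < ∑ i, Real.arctan (lam i)) :
    (∀ i : Fin n, (i : ℕ) < n - 1 → 0 < lam i) ∧
    |lam ⟨n - 1, by omega⟩| ≤ lam ⟨n - 2, by omega⟩ ∧
    0 < ∑ i, lam i := by
  have hπ : (0:ℝ) < π/2 := by positivity
  set j : Fin n := ⟨n - 2, by omega⟩ with hjdef
  set k : Fin n := ⟨n - 1, by omega⟩ with hkdef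
  -- Part 1: positivity of the first n-1 eigenvalues
  have hpos : ∀ i : Fin n, (i : ℕ) < n - 1 → 0 < lam i := by
    intro i hi
    by_contra hle
    push_neg at hle
    have hsplit := Finset.sum_filter_add_sum_filter_not univ (fun x : Fin n => x < i)
      (fun x => Real.arctan (lam x))
    have hcard : (univ.filter (fun x : Fin n => x < i)).card = (i : ℕ) := by
      have : univ.filter (fun x : Fin n => x < i) = Finset.Iio i := by ext x; simp
      rw [this]; exact Fin.card_Iio i
    have h1 : ∑ x ∈ univ.filter (fun x : Fin n => x < i), Real.arctan (lam x)
        ≤ ((i : ℕ) : ℝ) * (π/2) := by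
      have := Finset.sum_le_card_nsmul (univ.filter (fun x : Fin n => x < i))
        (fun x => Real.arctan (lam x)) (π/2) (fun x _ => (Real.arctan_lt_pi_div_two _).le)
      rwa [hcard, nsmul_eq_mul] at this
    have h2 : ∑ x ∈ univ.filter (fun x : Fin n => ¬ x < i), Real.arctan (lam x) ≤ 0 := by
      apply Finset.sum_nonpos
      intro x hx
      simp only [mem_filter, not_lt] at hx
      have hx0 : lam x ≤ 0 := le_trans (hmono hx.2) hle
      calc Real.arctan (lam x) ≤ Real.arctan 0 := Real.arctan_strictMono.monotone hx0
        _ = 0 := Real.arctan_zero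
    have hile : ((i : ℕ) : ℝ) ≤ (n : ℝ) - 2 := by
      have : (i : ℕ) ≤ n - 2 := by omega
      have h2' : ((i : ℕ) : ℝ) ≤ ((n - 2 : ℕ) : ℝ) := by exact_mod_cast this
      have : ((n - 2 : ℕ) : ℝ) = (n : ℝ) - 2 := by
        push_cast [Nat.cast_sub hn]; ring
      linarith
    nlinarith [h, hsplit, h1, h2]
  -- key: sum of arctans of the two smallest exceeds 0
  have hjk : j ≠ k := by
    simp only [hjdef, hkdef, Ne, Fin.mk.injEq]; omega
  have hcompl : ({j, k}ᶜ : Finset (Fin n)).card = n - 2 := by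
    rw [Finset.card_compl, Finset.card_pair hjk, Fintype.card_fin]
  have hsum2 : ∑ i ∈ ({j, k} : Finset (Fin n)), Real.arctan (lam i)
      + ∑ i ∈ ({j, k}ᶜ : Finset (Fin n)), Real.arctan (lam i) = ∑ i, Real.arctan (lam i) :=
    Finset.sum_add_sum_compl _ _
  have hbound : ∑ i ∈ ({j, k}ᶜ : Finset (Fin n)), Real.arctan (lam i) ≤ ((n : ℝ) - 2) * (π/2) := by
    have := Finset.sum_le_card_nsmul ({j, k}ᶜ : Finset (Fin n))
      (fun x => Real.arctan (lam x)) (π/2) (fun x _ => (Real.arctan_lt_pi_div_two _).le)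
    rw [hcompl, nsmul_eq_mul] at this
    have hc : ((n - 2 : ℕ) : ℝ) = (n : ℝ) - 2 := by push_cast [Nat.cast_sub hn]; ring
    linarith [this, hc ▸ this]
  have hpair : ∑ i ∈ ({j, k} : Finset (Fin n)), Real.arctan (lam i)
      = Real.arctan (lam j) + Real.arctan (lam k) := Finset.sum_pair hjk
  have hab : 0 < Real.arctan (lam j) + Real.arctan (lam k) := by
    rw [← hpair]; linarith [hsum2, hbound, h]
  have hlt : -lam k < lam j := by
    have : Real.arctan (-lam k) < Real.arctan (lam j) := by
      rw [Real.arctan_neg]; linarith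
    exact Real.arctan_strictMono.lt_iff_lt.mp this
  have hmkj : lam k ≤ lam j := hmono (by simp [hjdef, hkdef, Fin.le_def]; omega)
  refine ⟨hpos, ?_, ?_⟩
  · rw [abs_le]; constructor <;> linarith
  · have hsumlam : ∑ i ∈ ({j, k} : Finset (Fin n)), lam i
        + ∑ i ∈ ({j, k}ᶜ : Finset (Fin n)), lam i = ∑ i, lam i :=
      Finset.sum_add_sum_compl _ _
    have hpair' : ∑ i ∈ ({j, k} : Finset (Fin n)), lam i = lam j + lam k :=
      Finset.sum_pair hjk
    have hrest : 0 ≤ ∑ i ∈ ({j, k}ᶜ : Finset (Fin n)), lam i := by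
      apply Finset.sum_nonneg
      intro x hx
      simp only [Finset.mem_compl, Finset.mem_insert, Finset.mem_singleton, not_or] at hx
      have : (x : ℕ) < n - 1 := by
        have h1 := x.isLt
        have h2 : x ≠ j := hx.1
        have h3 : x ≠ k := hx.2
        have : (x : ℕ) ≠ n - 2 := fun hh => h2 (Fin.ext hh)
        have : (x : ℕ) ≠ n - 1 := fun hh => h3 (Fin.ext hh)
        omega
      exact (hpos x this).le
    linarith [hsumlam, hpair', hrest, hlt]
end

section
/- Let n ≥ 1 and suppose λ : Fin n → ℝ satisfies λᵢ > 0 for all i and θ(λ) = ∑ᵢ arctan(λᵢ) > (n-1)·π/2. Then with T = tan((n-1)·π/2 - θ(λ)) (which is negative), one has -1/T ≥ ∑ᵢ 1/λᵢ; equivalently 1 + T·∑ᵢ 1/λᵢ ≥ 0. -/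
open Real Finset

lemma tan_superadd {a b : ℝ} (ha : 0 ≤ a) (hb : 0 ≤ b) (hab : a + b < π / 2) :
    Real.tan a + Real.tan b ≤ Real.tan (a + b) := by
  have hca : 0 < Real.cos a := Real.cos_pos_of_mem_Ioo ⟨by linarith [Real.pi_pos], by linarith⟩
  have hcb : 0 < Real.cos b := Real.cos_pos_of_mem_Ioo ⟨by linarith [Real.pi_pos], by linarith⟩
  have hcab : 0 < Real.cos (a + b) :=
    Real.cos_pos_of_mem_Ioo ⟨by linarith [Real.pi_pos], hab⟩
  have hta : 0 ≤ Real.tan a := by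
    rw [Real.tan_eq_sin_div_cos]
    exact div_nonneg (Real.sin_nonneg_of_nonneg_of_le_pi ha (by linarith [Real.pi_pos])) hca.le
  have htb : 0 ≤ Real.tan b := by
    rw [Real.tan_eq_sin_div_cos]
    exact div_nonneg (Real.sin_nonneg_of_nonneg_of_le_pi hb (by linarith [Real.pi_pos])) hcb.le
  have htab : 0 ≤ Real.tan (a + b) := by
    rw [Real.tan_eq_sin_div_cos]
    exact div_nonneg (Real.sin_nonneg_of_nonneg_of_le_pi (by linarith)
      (by linarith [Real.pi_pos])) hcab.le
  have hcab' : Real.cos a * Real.cos b - Real.sin a * Real.sin b ≠ 0 := by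
    rw [← Real.cos_add]; exact hcab.ne'
  have hkey : Real.tan (a + b) * (1 - Real.tan a * Real.tan b) = Real.tan a + Real.tan b := by
    rw [Real.tan_eq_sin_div_cos, Real.tan_eq_sin_div_cos, Real.tan_eq_sin_div_cos,
      Real.sin_add, Real.cos_add]
    field_simp [hca.ne', hcb.ne', hcab']
    exact mul_div_cancel_right₀ _ (by rw [mul_comm (Real.cos b)]; exact hcab')
  have hpos : 0 < 1 - Real.tan a * Real.tan b := by
    have : 1 - Real.tan a * Real.tan b =
        Real.cos (a + b) / (Real.cos a * Real.cos b) := by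
      rw [Real.tan_eq_sin_div_cos, Real.tan_eq_sin_div_cos, Real.cos_add]
      field_simp
    rw [this]
    positivity
  nlinarith [mul_nonneg hta htb, mul_nonneg htab (mul_nonneg hta htb)]

lemma tan_sum_superadd {ι : Type*} (s : Finset ι) (y : ι → ℝ)
    (h0 : ∀ i ∈ s, 0 ≤ y i) (hs : ∑ i ∈ s, y i < π / 2) :
    ∑ i ∈ s, Real.tan (y i) ≤ Real.tan (∑ i ∈ s, y i) := by
  induction s using Finset.cons_induction with
  | empty => simp
  | cons a s has ih =>
    rw [Finset.sum_cons, Finset.sum_cons] at *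
    have hya : 0 ≤ y a := h0 a (Finset.mem_cons_self a s)
    have hsum : 0 ≤ ∑ i ∈ s, y i :=
      Finset.sum_nonneg fun i hi => h0 i (Finset.mem_cons_of_mem hi)
    have h1 : ∑ i ∈ s, y i < π / 2 := by linarith
    have ih' := ih (fun i hi => h0 i (Finset.mem_cons_of_mem hi)) h1
    calc Real.tan (y a) + ∑ i ∈ s, Real.tan (y i)
        ≤ Real.tan (y a) + Real.tan (∑ i ∈ s, y i) := by linarith
      _ ≤ Real.tan (y a + ∑ i ∈ s, y i) := tan_superadd hya hsum hs

theorem case_one_inequality (n : ℕ) (hn : 1 ≤ n) (lam : Fin n → ℝ)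
    (hpos : ∀ i, 0 < lam i)
    (h : ((n : ℝ) - 1) * (π / 2) < ∑ i, Real.arctan (lam i)) :
    Real.tan (((n : ℝ) - 1) * (π / 2) - ∑ i, Real.arctan (lam i)) < 0 ∧
    (∑ i, 1 / lam i)
      ≤ -1 / Real.tan (((n : ℝ) - 1) * (π / 2) - ∑ i, Real.arctan (lam i)) ∧
    0 ≤ 1 + Real.tan (((n : ℝ) - 1) * (π / 2) - ∑ i, Real.arctan (lam i))
          * ∑ i, 1 / lam i := by
  set y : Fin n → ℝ := fun i => π / 2 - Real.arctan (lam i) with hy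
  have hy0 : ∀ i ∈ Finset.univ (α := Fin n), 0 ≤ y i := fun i _ => by
    have := Real.arctan_lt_pi_div_two (lam i); simp [hy]; linarith
  have hS : ∑ i, y i = (n : ℝ) * (π / 2) - ∑ i, Real.arctan (lam i) := by
    simp [hy, Finset.sum_sub_distrib, Finset.card_univ]
  have hSlt : ∑ i, y i < π / 2 := by rw [hS]; linarith
  have hSpos : 0 < ∑ i, y i := by
    have : 0 < y ⟨0, hn⟩ := by
      have h1 := (Real.arctan_lt_pi_div_two (lam ⟨0, hn⟩))
      simp [hy]; linarith
    exact Finset.sum_pos' hy0 ⟨⟨0, hn⟩, Finset.mem_univ _, this⟩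
  have htanS : 0 < Real.tan (∑ i, y i) :=
    Real.tan_pos_of_pos_of_lt_pi_div_two hSpos hSlt
  have hsum_le : ∑ i, 1 / lam i ≤ Real.tan (∑ i, y i) := by
    have := tan_sum_superadd Finset.univ y hy0 hSlt
    have heq : ∀ i : Fin n, Real.tan (y i) = 1 / lam i := fun i => by
      rw [hy]; simp [Real.tan_pi_div_two_sub, Real.tan_arctan, one_div]
    calc ∑ i, 1 / lam i = ∑ i, Real.tan (y i) := by simp [heq]
      _ ≤ _ := this
  have hE : ((n : ℝ) - 1) * (π / 2) - ∑ i, Real.arctan (lam i)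
      = -(π / 2 - ∑ i, y i) := by rw [hS]; ring
  have hTeq : Real.tan (((n : ℝ) - 1) * (π / 2) - ∑ i, Real.arctan (lam i))
      = -(Real.tan (∑ i, y i))⁻¹ := by
    rw [hE, Real.tan_neg, Real.tan_pi_div_two_sub]
  have hTneg : Real.tan (((n : ℝ) - 1) * (π / 2) - ∑ i, Real.arctan (lam i)) < 0 := by
    rw [hTeq]; exact neg_neg_of_pos (inv_pos.mpr htanS)
  refine ⟨hTneg, ?_, ?_⟩
  · rw [hTeq]
    rw [neg_div, div_neg, neg_neg, one_div, inv_inv]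
    exact hsum_le
  · rw [hTeq]
    have hinv : 0 < (Real.tan (∑ i, y i))⁻¹ := by positivity
    have h2 : (Real.tan (∑ i, y i))⁻¹ * (∑ i, 1 / lam i) ≤ 1 := by
      rw [inv_mul_le_iff₀ htanS] ; linarith
    nlinarith
end

section
/- Assume Θ̂ ∈ ((n-1)·π/2, n·π/2). Then the function f(λ) = tan(θ(λ) - Θ̂), where θ(λ) = ∑ᵢ arctan(λᵢ), is concave on the open set S = {λ ∈ ℝⁿ : |θ(λ) - Θ̂| < π/2}, i.e., its Hessian is negative semidefinite at every point of S. -/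
open Real Finset


private lemma arctan_add_le {x y : ℝ} (hx : 0 ≤ x) (hy : 0 ≤ y) :
    arctan (x + y) ≤ arctan x + arctan y := by
  by_cases h : x * y < 1
  · rw [arctan_add h]
    apply arctan_strictMono.monotone
    have h1 : 0 < 1 - x * y := by linarith
    rw [le_div_iff₀ h1]
    nlinarith [mul_nonneg hx hy]
  · push_neg at h
    have hy0 : 0 < y := by nlinarith
    have h1 : y⁻¹ ≤ x := by
      rw [inv_eq_one_div, div_le_iff₀ hy0]; nlinarith
    have h2 : arctan y⁻¹ ≤ arctan x := arctan_strictMono.monotone h1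
    rw [arctan_inv_of_pos hy0] at h2
    have h3 := arctan_lt_pi_div_two (x + y)
    linarith

private lemma arctan_sum_le {ι : Type*} (s : Finset ι) (g : ι → ℝ) (h : ∀ i ∈ s, 0 ≤ g i) :
    arctan (∑ i ∈ s, g i) ≤ ∑ i ∈ s, arctan (g i) := by
  induction s using Finset.cons_induction with
  | empty => simp
  | cons a s ha ih =>
    rw [Finset.sum_cons, Finset.sum_cons]
    have h1 : 0 ≤ g a := h a (Finset.mem_cons_self _ _)
    have h2 : ∀ i ∈ s, 0 ≤ g i := fun i hi => h i (Finset.mem_cons_of_mem hi)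
    have h3 : 0 ≤ ∑ i ∈ s, g i := Finset.sum_nonneg h2
    calc arctan (g a + ∑ i ∈ s, g i) ≤ arctan (g a) + arctan (∑ i ∈ s, g i) :=
        arctan_add_le h1 h3
      _ ≤ _ := by linarith [ih h2]

private lemma cs_lemma {ι : Type*} (s : Finset ι) (lam mu : ι → ℝ) (h : ∀ i ∈ s, 0 < lam i) :
    (∑ i ∈ s, mu i) ^ 2 ≤ (∑ i ∈ s, (lam i)⁻¹) * ∑ i ∈ s, lam i * mu i ^ 2 := by
  have hcs := Finset.sum_mul_sq_le_sq_mul_sq s (fun i => Real.sqrt (lam i)⁻¹)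
    (fun i => Real.sqrt (lam i) * mu i)
  have e1 : ∑ i ∈ s, Real.sqrt (lam i)⁻¹ * (Real.sqrt (lam i) * mu i) = ∑ i ∈ s, mu i := by
    refine Finset.sum_congr rfl fun i hi => ?_
    rw [Real.sqrt_inv, inv_mul_cancel_left₀ (ne_of_gt (Real.sqrt_pos.mpr (h i hi)))]
  have e2 : ∑ i ∈ s, (Real.sqrt (lam i)⁻¹) ^ 2 = ∑ i ∈ s, (lam i)⁻¹ := by
    refine Finset.sum_congr rfl fun i hi => ?_
    rw [Real.sq_sqrt (inv_nonneg.mpr (h i hi).le)]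
  have e3 : ∑ i ∈ s, (Real.sqrt (lam i) * mu i) ^ 2 = ∑ i ∈ s, lam i * mu i ^ 2 := by
    refine Finset.sum_congr rfl fun i hi => ?_
    rw [mul_pow, Real.sq_sqrt (h i hi).le]
  rw [e1, e2, e3] at hcs
  exact hcs




private lemma key_quadratic (n : ℕ) (lam mu : Fin n → ℝ)
    (hθ : ((n : ℝ) - 2) * (π / 2) < ∑ i, arctan (lam i)) :
    0 ≤ ∑ i, lam i * mu i ^ 2
      + tan (((n : ℝ) - 1) * (π / 2) - ∑ i, arctan (lam i)) * (∑ i, mu i) ^ 2 := by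
  rcases Nat.eq_zero_or_pos n with hn | hn
  · subst hn; simp
  set θ := ∑ i, arctan (lam i) with hθdef
  clear_value θ
  set α := ((n : ℝ) - 1) * (π / 2) - θ with hαdef
  clear_value α
  have hα2 : α < π / 2 := by rw [hαdef]; linarith
  have hθub : θ < (n : ℝ) * (π / 2) := by
    have hne : (Finset.univ : Finset (Fin n)).Nonempty := by
      simpa [Finset.univ_nonempty_iff] using Fin.pos_iff_nonempty.mp hn
    have h1 : ∑ i, arctan (lam i) < ∑ _i : Fin n, π / 2 :=
      Finset.sum_lt_sum_of_nonempty hne fun i _ => arctan_lt_pi_div_two _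
    have h2 : ∑ _i : Fin n, π / 2 = (n : ℝ) * (π / 2) := by
      rw [Finset.sum_const, Finset.card_univ, Fintype.card_fin, nsmul_eq_mul]
    rw [hθdef, ← h2]; exact h1
  have hα1 : -(π / 2) < α := by rw [hαdef]; linarith
  set T := tan α with hTdef
  clear_value T
  by_cases hpos : ∀ i, 0 < lam i
  · -- all positive
    have hA : 0 ≤ ∑ i, lam i * mu i ^ 2 :=
      Finset.sum_nonneg fun i _ => mul_nonneg (hpos i).le (sq_nonneg _)
    by_cases hT : 0 ≤ T
    · nlinarith [mul_nonneg hT (sq_nonneg (∑ i, mu i))]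
    · push_neg at hT
      have hα0 : α < 0 := by
        by_contra h
        push_neg at h
        rw [hTdef] at hT
        exact absurd (tan_nonneg_of_nonneg_of_le_pi_div_two h hα2.le) (not_le.mpr hT)
      set K := ∑ i, (lam i)⁻¹ with hKdef
      have hsum_inv : ∑ i, arctan (lam i)⁻¹ = π / 2 + α := by
        have e : ∀ i ∈ (univ : Finset (Fin n)), arctan (lam i)⁻¹ = π / 2 - arctan (lam i) :=
          fun i _ => arctan_inv_of_pos (hpos i)
        rw [Finset.sum_congr rfl e, Finset.sum_sub_distrib, Finset.sum_const,
          Finset.card_univ, Fintype.card_fin, nsmul_eq_mul, hαdef, hθdef]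
        ring
      have harc : arctan K ≤ π / 2 + α :=
        le_trans (arctan_sum_le univ _ (fun i _ => inv_nonneg.mpr (hpos i).le))
          (le_of_eq hsum_inv)
      clear_value K
      have hKle : K ≤ tan (π / 2 + α) := by
        nth_rewrite 1 [← tan_arctan K]
        refine strictMonoOn_tan.monotoneOn ⟨neg_pi_div_two_lt_arctan _, arctan_lt_pi_div_two _⟩
          ⟨by linarith, by linarith⟩ harc
      have hid : tan (π / 2 + α) = (tan (-α))⁻¹ := by
        rw [show π / 2 + α = π / 2 - (-α) by ring, tan_pi_div_two_sub]
      have htanpos : 0 < tan (-α) := by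
        apply tan_pos_of_pos_of_lt_pi_div_two <;> linarith
      have hTK : -1 ≤ T * K := by
        have h5 : tan (-α) * K ≤ tan (-α) * (tan (-α))⁻¹ :=
          mul_le_mul_of_nonneg_left (hKle.trans (le_of_eq hid)) htanpos.le
        rw [mul_inv_cancel₀ htanpos.ne'] at h5
        rw [tan_neg, ← hTdef] at h5
        linarith
      have hCS : (∑ i, mu i) ^ 2 ≤ K * ∑ i, lam i * mu i ^ 2 := by
        rw [hKdef]; exact cs_lemma univ lam mu fun i _ => hpos i
      nlinarith [add_nonneg (mul_nonneg (by linarith : (0:ℝ) ≤ 1 + T * K) hA)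
        (mul_nonneg (by linarith : (0:ℝ) ≤ -T)
          (by linarith : (0:ℝ) ≤ K * (∑ i, lam i * mu i ^ 2) - (∑ i, mu i) ^ 2))]
  · -- some nonpositive entry
    push_neg at hpos
    obtain ⟨k, hk'⟩ := hpos
    have hk : lam k ≤ 0 := hk'
    have hothers : ∀ i, i ≠ k → 0 < lam i := by
      intro j hj
      by_contra hJ
      push_neg at hJ
      have hn2 : 2 ≤ n := by
        rcases Nat.lt_or_ge n 2 with h | h
        · exact absurd (Fin.ext (by omega : j.val = k.val)) hj
        · exact h
      have hjk : j ∈ (univ : Finset (Fin n)).erase k := Finset.mem_erase.mpr ⟨hj, mem_univ _⟩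
      have hsplit1 : θ = arctan (lam k) + ∑ i ∈ univ.erase k, arctan (lam i) := by
        rw [hθdef]; exact (Finset.add_sum_erase _ _ (mem_univ k)).symm
      have hsplit2 : ∑ i ∈ univ.erase k, arctan (lam i)
          = arctan (lam j) + ∑ i ∈ (univ.erase k).erase j, arctan (lam i) :=
        (Finset.add_sum_erase _ _ hjk).symm
      have hbound : ∑ i ∈ (univ.erase k).erase j, arctan (lam i)
          ≤ ((n : ℝ) - 2) * (π / 2) := by
        have h1 : ∑ i ∈ (univ.erase k).erase j, arctan (lam i)
            ≤ ((univ.erase k).erase j).card • (π / 2) :=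
          Finset.sum_le_card_nsmul _ _ _ fun i _ => (arctan_lt_pi_div_two _).le
        have h2 : ((univ.erase k).erase j).card = n - 2 := by
          rw [Finset.card_erase_of_mem hjk, Finset.card_erase_of_mem (mem_univ k),
            Finset.card_univ, Fintype.card_fin]
          omega
        rw [h2, nsmul_eq_mul] at h1
        have h3 : ((n - 2 : ℕ) : ℝ) = (n : ℝ) - 2 := by
          push_cast [Nat.cast_sub hn2]; ring
        rw [h3] at h1
        exact h1
      have hak : arctan (lam k) ≤ 0 := by
        rw [← arctan_zero]; exact arctan_strictMono.monotone hk
      have haj : arctan (lam j) ≤ 0 := by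
        rw [← arctan_zero]; exact arctan_strictMono.monotone hJ
      linarith
    rcases Finset.eq_empty_or_nonempty ((univ : Finset (Fin n)).erase k) with hse | hsne
    · -- n = 1
      have hn1 : n = 1 := by
        have hc := Finset.card_erase_of_mem (mem_univ k)
        rw [hse, Finset.card_empty, Finset.card_univ, Fintype.card_fin] at hc
        omega
      subst hn1
      have huniv : (univ : Finset (Fin 1)) = {k} := by
        rw [← Finset.insert_erase (mem_univ k), hse]; rfl
      have hθk : θ = arctan (lam k) := by
        rw [hθdef, huniv, Finset.sum_singleton]
      have hsum1 : ∑ i, lam i * mu i ^ 2 = lam k * mu k ^ 2 := by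
        rw [huniv, Finset.sum_singleton]
      have hsum2 : ∑ i, mu i = mu k := by rw [huniv, Finset.sum_singleton]
      have hTα : T = -lam k := by
        rw [hTdef, hαdef, hθk]
        norm_num
      rw [hsum1, hsum2, hTα]
      nlinarith [sq_nonneg (mu k)]
    · -- n ≥ 2 : main case
      set s := (univ : Finset (Fin n)).erase k with hsdef
      clear_value s
      have hs_pos : ∀ i ∈ s, 0 < lam i := fun i hi =>
        hothers i (Finset.ne_of_mem_erase (hsdef ▸ hi))
      set a := -lam k with hadef
      have ha0 : 0 ≤ a := by rw [hadef]; linarith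
      have hlamk : lam k = -a := by rw [hadef]; ring
      clear_value a
      set K := ∑ i ∈ s, (lam i)⁻¹ with hKdef
      have hK : 0 < K := Finset.sum_pos (fun i hi => inv_pos.mpr (hs_pos i hi)) hsne
      have hcards : (s.card : ℝ) = (n : ℝ) - 1 := by
        rw [hsdef, Finset.card_erase_of_mem (mem_univ k), Finset.card_univ, Fintype.card_fin]
        push_cast [Nat.cast_sub hn]
        ring
      have hαeq : α = arctan a + ∑ i ∈ s, arctan (lam i)⁻¹ := by
        have e : ∀ i ∈ s, arctan (lam i)⁻¹ = π / 2 - arctan (lam i) :=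
          fun i hi => arctan_inv_of_pos (hs_pos i hi)
        have hsplitθ : θ = arctan (lam k) + ∑ i ∈ s, arctan (lam i) := by
          rw [hθdef, hsdef]; exact (Finset.add_sum_erase _ _ (mem_univ k)).symm
        rw [Finset.sum_congr rfl e, Finset.sum_sub_distrib, Finset.sum_const, nsmul_eq_mul,
          hadef, arctan_neg, hαdef, hsplitθ]
        rw [show ((s.card : ℝ)) * (π / 2) = ((n : ℝ) - 1) * (π / 2) by rw [hcards]]
        ring
      have h2 : arctan a + arctan K ≤ α := by
        have h1 := arctan_sum_le s (fun i => (lam i)⁻¹)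
          (fun i hi => inv_nonneg.mpr (hs_pos i hi).le)
        rw [← hKdef] at h1
        linarith [hαeq]
      clear_value K
      have harca : 0 ≤ arctan a := by
        rw [← arctan_zero]; exact arctan_strictMono.monotone ha0
      have harcK : 0 ≤ arctan K := by
        rw [← arctan_zero]; exact arctan_strictMono.monotone hK.le
      have hα0 : 0 ≤ α := le_trans (add_nonneg harca harcK) h2
      have hT0 : 0 ≤ T := by
        rw [hTdef]; exact tan_nonneg_of_nonneg_of_le_pi_div_two hα0 hα2.le
      have haK : a * K < 1 := by
        have h3 : arctan a < π / 2 - arctan K := by linarith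
        rw [← arctan_inv_of_pos hK] at h3
        have h4 : a < K⁻¹ := arctan_strictMono.lt_iff_lt.mp h3
        calc a * K < K⁻¹ * K := mul_lt_mul_of_pos_right h4 hK
          _ = 1 := inv_mul_cancel₀ hK.ne'
      have h1aK : 0 < 1 - a * K := by linarith
      have hfrac_le : (a + K) / (1 - a * K) ≤ T := by
        have hadd : arctan a + arctan K = arctan ((a + K) / (1 - a * K)) := arctan_add haK
        have h5 : arctan ((a + K) / (1 - a * K)) ≤ α := by rw [← hadd]; exact h2
        nth_rewrite 1 [← tan_arctan ((a + K) / (1 - a * K))]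
        rw [hTdef]
        refine strictMonoOn_tan.monotoneOn ⟨neg_pi_div_two_lt_arctan _, arctan_lt_pi_div_two _⟩
          ⟨by linarith, hα2⟩ h5
      have hTexp : a + K ≤ T - a * T * K := by
        have h6 : a + K ≤ T * (1 - a * K) := (div_le_iff₀ h1aK).mp hfrac_le
        have h6' : T * (1 - a * K) = T - a * T * K := by ring
        linarith
      have hCS : (∑ i ∈ s, mu i) ^ 2 ≤ K * ∑ i ∈ s, lam i * mu i ^ 2 := by
        rw [hKdef]; exact cs_lemma s lam mu hs_pos
      have hAs : 0 ≤ ∑ i ∈ s, lam i * mu i ^ 2 :=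
        Finset.sum_nonneg fun i hi => mul_nonneg (hs_pos i hi).le (sq_nonneg _)
      set A := ∑ i ∈ s, lam i * mu i ^ 2 with hAdef
      set w := ∑ i ∈ s, mu i with hwdef
      set m := mu k with hmdef
      have hsplitA : ∑ i, lam i * mu i ^ 2 = lam k * m ^ 2 + A := by
        rw [hAdef, hsdef, hmdef]; exact (Finset.add_sum_erase _ _ (mem_univ k)).symm
      have hsplitw : ∑ i, mu i = m + w := by
        rw [hwdef, hsdef, hmdef]; exact (Finset.add_sum_erase _ _ (mem_univ k)).symm
      clear_value A w m
      rw [hsplitA, hsplitw]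
      rw [hlamk]
      clear * - hK ha0 hT0 hTexp hCS
      have h1TK : 0 < 1 + T * K := by nlinarith
      have hX : 0 ≤ -(a * K) * m ^ 2 + w ^ 2 + T * K * (m + w) ^ 2 := by
        have hid2 : (1 + T * K) * (-(a * K) * m ^ 2 + w ^ 2 + T * K * (m + w) ^ 2)
            = ((1 + T * K) * w + T * K * m) ^ 2 + K * m ^ 2 * ((T - a * T * K) - a) := by
          ring
        have h7 : 0 ≤ ((1 + T * K) * w + T * K * m) ^ 2
            + K * m ^ 2 * ((T - a * T * K) - a) := by
          have h7a : 0 ≤ (T - a * T * K) - a := by linarith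
          have h7b : 0 ≤ K * m ^ 2 := mul_nonneg hK.le (sq_nonneg m)
          nlinarith [sq_nonneg ((1 + T * K) * w + T * K * m), mul_nonneg h7b h7a]
        have h9 : 0 ≤ (1 + T * K) * (-(a * K) * m ^ 2 + w ^ 2 + T * K * (m + w) ^ 2) := by
          rw [hid2]; exact h7
        exact (mul_nonneg_iff_of_pos_left h1TK).mp h9
      have h8 : 0 ≤ K * (-a * m ^ 2 + A + T * (m + w) ^ 2) := by
        have e : K * (-a * m ^ 2 + A + T * (m + w) ^ 2)
            = (-(a * K) * m ^ 2 + w ^ 2 + T * K * (m + w) ^ 2) + (K * A - w ^ 2) := by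
          ring
        rw [e]
        have : 0 ≤ K * A - w ^ 2 := by linarith
        linarith [hX]
      exact (mul_nonneg_iff_of_pos_left hK).mp h8




private lemma key_point (n : ℕ) (Θhat : ℝ) (hΘ1 : ((n : ℝ) - 1) * (π / 2) < Θhat)
    (lam mu : Fin n → ℝ) (hS : |(∑ i, arctan (lam i)) - Θhat| < π / 2) :
    tan ((∑ i, arctan (lam i)) - Θhat) * (∑ i, mu i) ^ 2 ≤ ∑ i, lam i * mu i ^ 2 := by
  rcases Nat.eq_zero_or_pos n with hn | hn
  · subst hn; simp
  obtain ⟨hS1, hS2⟩ := abs_lt.mp hS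
  set θ := ∑ i, arctan (lam i) with hθdef
  have hθlow : ((n : ℝ) - 2) * (π / 2) < θ := by nlinarith [pi_pos]
  have hθub : θ < (n : ℝ) * (π / 2) := by
    have hne : (Finset.univ : Finset (Fin n)).Nonempty := by
      simpa [Finset.univ_nonempty_iff] using Fin.pos_iff_nonempty.mp hn
    have h1 : ∑ i, arctan (lam i) < ∑ _i : Fin n, π / 2 :=
      Finset.sum_lt_sum_of_nonempty hne fun i _ => arctan_lt_pi_div_two _
    have h2 : ∑ _i : Fin n, π / 2 = (n : ℝ) * (π / 2) := by
      rw [Finset.sum_const, Finset.card_univ, Fintype.card_fin, nsmul_eq_mul]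
    rw [hθdef, ← h2]; exact h1
  have hkey := key_quadratic n lam mu (by rw [← hθdef]; exact hθlow)
  rw [← hθdef] at hkey
  have htan : tan (θ - Θhat) ≤ tan (θ - ((n : ℝ) - 1) * (π / 2)) := by
    refine strictMonoOn_tan.monotoneOn ⟨by linarith, by linarith⟩
      ⟨by nlinarith [pi_pos], by nlinarith [pi_pos]⟩ (by linarith)
  have hneg : tan (θ - ((n : ℝ) - 1) * (π / 2))
      = -tan (((n : ℝ) - 1) * (π / 2) - θ) := by
    rw [← tan_neg, neg_sub]
  have hmul : tan (θ - Θhat) * (∑ i, mu i) ^ 2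
      ≤ tan (θ - ((n : ℝ) - 1) * (π / 2)) * (∑ i, mu i) ^ 2 :=
    mul_le_mul_of_nonneg_right htan (sq_nonneg _)
  rw [hneg] at hmul
  linarith [hkey, hmul]




private lemma concave_1d (n : ℕ) (Θhat : ℝ) (hΘ1 : ((n : ℝ) - 1) * (π / 2) < Θhat)
    (x v : Fin n → ℝ)
    (hmem : ∀ t ∈ Set.Icc (0:ℝ) 1, |(∑ i, arctan (x i + t * v i)) - Θhat| < π / 2) :
    ConcaveOn ℝ (Set.Icc (0:ℝ) 1)
      (fun t => tan ((∑ i, arctan (x i + t * v i)) - Θhat)) := by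
  have hψd : ∀ t : ℝ, HasDerivAt (fun s => (∑ i, arctan (x i + s * v i)) - Θhat)
      (∑ i, v i * (1 + (x i + t * v i) ^ 2)⁻¹) t := by
    intro t
    apply HasDerivAt.sub_const
    apply HasDerivAt.fun_sum
    intro i _
    have h0 : HasDerivAt (fun s : ℝ => x i + s * v i) (v i) t := by
      simpa using (hasDerivAt_mul_const (v i)).const_add (x i)
    have h1 := h0.arctan
    simpa [div_eq_mul_inv, mul_comm] using h1
  have hψ1d : ∀ t : ℝ, HasDerivAt (fun s => ∑ i, v i * (1 + (x i + s * v i) ^ 2)⁻¹)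
      (∑ i, v i * (-(2 * (x i + t * v i) * v i) / ((1 + (x i + t * v i) ^ 2) ^ 2))) t := by
    intro t
    apply HasDerivAt.fun_sum
    intro i _
    have h0 : HasDerivAt (fun s : ℝ => x i + s * v i) (v i) t := by
      simpa using (hasDerivAt_mul_const (v i)).const_add (x i)
    have hq : HasDerivAt (fun s : ℝ => 1 + (x i + s * v i) ^ 2)
        (2 * (x i + t * v i) * v i) t := by
      have h2 := (h0.pow 2).const_add 1
      simpa using h2
    have hne : (1 + (x i + t * v i) ^ 2) ≠ 0 := by positivity
    exact (hq.inv hne).const_mul (v i)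
  have hcos : ∀ t ∈ Set.Icc (0:ℝ) 1, cos ((∑ i, arctan (x i + t * v i)) - Θhat) ≠ 0 := by
    intro t ht
    obtain ⟨h1, h2⟩ := abs_lt.mp (hmem t ht)
    exact (cos_pos_of_mem_Ioo ⟨h1, h2⟩).ne'
  have hgd : ∀ t ∈ Set.Icc (0:ℝ) 1,
      HasDerivAt (fun s => tan ((∑ i, arctan (x i + s * v i)) - Θhat))
        ((1 + tan ((∑ i, arctan (x i + t * v i)) - Θhat) ^ 2)
          * ∑ i, v i * (1 + (x i + t * v i) ^ 2)⁻¹) t := by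
    intro t ht
    have h1 := (hasDerivAt_tan (hcos t ht)).comp t (hψd t)
    have h2 : 1 / cos ((∑ i, arctan (x i + t * v i)) - Θhat) ^ 2
        = 1 + tan ((∑ i, arctan (x i + t * v i)) - Θhat) ^ 2 := by
      rw [one_div, ← Real.inv_one_add_tan_sq (hcos t ht), inv_inv]
    rw [h2] at h1
    exact h1
  have hG1d : ∀ t ∈ Set.Icc (0:ℝ) 1,
      HasDerivAt (fun s => (1 + tan ((∑ i, arctan (x i + s * v i)) - Θhat) ^ 2)
          * ∑ i, v i * (1 + (x i + s * v i) ^ 2)⁻¹)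
        (2 * tan ((∑ i, arctan (x i + t * v i)) - Θhat)
            * ((1 + tan ((∑ i, arctan (x i + t * v i)) - Θhat) ^ 2)
              * ∑ i, v i * (1 + (x i + t * v i) ^ 2)⁻¹)
            * (∑ i, v i * (1 + (x i + t * v i) ^ 2)⁻¹)
          + (1 + tan ((∑ i, arctan (x i + t * v i)) - Θhat) ^ 2)
            * ∑ i, v i * (-(2 * (x i + t * v i) * v i) / ((1 + (x i + t * v i) ^ 2) ^ 2))) t := by
    intro t ht
    have h1 := ((hgd t ht).fun_pow 2).const_add 1
    have h3 := h1.fun_mul (hψ1d t)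
    refine h3.congr_deriv ?_
    ring
  refine concaveOn_of_hasDerivWithinAt2_nonpos (convex_Icc 0 1)
    (fun t ht => ((hgd t ht).continuousAt).continuousWithinAt)
    (f' := fun t => (1 + tan ((∑ i, arctan (x i + t * v i)) - Θhat) ^ 2)
          * ∑ i, v i * (1 + (x i + t * v i) ^ 2)⁻¹)
    (f'' := fun t => 2 * tan ((∑ i, arctan (x i + t * v i)) - Θhat)
            * ((1 + tan ((∑ i, arctan (x i + t * v i)) - Θhat) ^ 2)
              * ∑ i, v i * (1 + (x i + t * v i) ^ 2)⁻¹)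
            * (∑ i, v i * (1 + (x i + t * v i) ^ 2)⁻¹)
          + (1 + tan ((∑ i, arctan (x i + t * v i)) - Θhat) ^ 2)
            * ∑ i, v i * (-(2 * (x i + t * v i) * v i) / ((1 + (x i + t * v i) ^ 2) ^ 2)))
    (fun t ht => ((hgd t (interior_subset ht)).hasDerivWithinAt))
    (fun t ht => ((hG1d t (interior_subset ht)).hasDerivWithinAt))
    ?_
  intro t ht
  have htI : t ∈ Set.Icc (0:ℝ) 1 := interior_subset ht
  set mm : Fin n → ℝ := fun i => v i * (1 + (x i + t * v i) ^ 2)⁻¹ with hmm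
  have hkp := key_point n Θhat hΘ1 (fun i => x i + t * v i) mm (hmem t htI)
  have hψ2eq : ∑ i, v i * (-(2 * (x i + t * v i) * v i) / ((1 + (x i + t * v i) ^ 2) ^ 2))
      = -2 * ∑ i, (x i + t * v i) * mm i ^ 2 := by
    rw [Finset.mul_sum]
    refine Finset.sum_congr rfl fun i _ => ?_
    have hne : (1 + (x i + t * v i) ^ 2) ≠ 0 := by positivity
    rw [hmm]
    field_simp
  rw [hψ2eq]
  have hbr : 2 * tan ((∑ i, arctan (x i + t * v i)) - Θhat) * (∑ i, mm i) ^ 2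
      + (1 : ℝ) * (-2 * ∑ i, (x i + t * v i) * mm i ^ 2) ≤ 0 := by
    have := hkp
    nlinarith [hkp]
  have hfac : 2 * tan ((∑ i, arctan (x i + t * v i)) - Θhat)
            * ((1 + tan ((∑ i, arctan (x i + t * v i)) - Θhat) ^ 2) * ∑ i, mm i)
            * (∑ i, mm i)
          + (1 + tan ((∑ i, arctan (x i + t * v i)) - Θhat) ^ 2)
            * (-2 * ∑ i, (x i + t * v i) * mm i ^ 2)
      = (1 + tan ((∑ i, arctan (x i + t * v i)) - Θhat) ^ 2)
        * (2 * tan ((∑ i, arctan (x i + t * v i)) - Θhat) * (∑ i, mm i) ^ 2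
          + (-2 * ∑ i, (x i + t * v i) * mm i ^ 2)) := by
    ring
  rw [hfac]
  have hpos : (0:ℝ) ≤ 1 + tan ((∑ i, arctan (x i + t * v i)) - Θhat) ^ 2 := by positivity
  have hbr' : 2 * tan ((∑ i, arctan (x i + t * v i)) - Θhat) * (∑ i, mm i) ^ 2
      + (-2 * ∑ i, (x i + t * v i) * mm i ^ 2) ≤ 0 := by linarith [hbr]
  exact mul_nonpos_iff.mpr (Or.inl ⟨hpos, hbr'⟩)




private lemma concave_of_convexS (n : ℕ) (Θhat : ℝ) (hΘ1 : ((n : ℝ) - 1) * (π / 2) < Θhat)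
    (hconv : Convex ℝ {lam : Fin n → ℝ | |(∑ i, arctan (lam i)) - Θhat| < π / 2}) :
    ConcaveOn ℝ {lam : Fin n → ℝ | |(∑ i, arctan (lam i)) - Θhat| < π / 2}
      (fun lam => tan ((∑ i, arctan (lam i)) - Θhat)) := by
  refine ⟨hconv, fun x hx y hy a b ha hb hab => ?_⟩
  have hmem : ∀ t ∈ Set.Icc (0:ℝ) 1,
      |(∑ i, arctan (x i + t * (y i - x i))) - Θhat| < π / 2 := by
    intro t ht
    have h1 := hconv hx hy (by linarith [ht.2] : (0:ℝ) ≤ 1 - t) ht.1 (by ring)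
    have h2 : (∑ i, arctan (x i + t * (y i - x i)))
        = ∑ i, arctan (((1 - t) • x + t • y) i) := by
      refine Finset.sum_congr rfl fun i _ => ?_
      simp only [Pi.add_apply, Pi.smul_apply, smul_eq_mul]
      ring_nf
    rw [Set.mem_setOf_eq] at h1
    rw [h2]
    exact h1
  have hgc := concave_1d n Θhat hΘ1 x (fun i => y i - x i) hmem
  have h0 : (0:ℝ) ∈ Set.Icc (0:ℝ) 1 := Set.left_mem_Icc.mpr zero_le_one
  have h1 : (1:ℝ) ∈ Set.Icc (0:ℝ) 1 := Set.right_mem_Icc.mpr zero_le_one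
  have hineq := hgc.2 h0 h1 ha hb hab
  simp only [smul_eq_mul, mul_zero, mul_one, zero_add] at hineq
  have e0 : (∑ i, arctan (x i + 0 * (y i - x i))) = ∑ i, arctan (x i) := by
    refine Finset.sum_congr rfl fun i _ => ?_; norm_num
  have e1 : (∑ i, arctan (x i + 1 * (y i - x i))) = ∑ i, arctan (y i) := by
    refine Finset.sum_congr rfl fun i _ => ?_; ring_nf
  have eb : (∑ i, arctan (x i + b * (y i - x i))) = ∑ i, arctan ((a • x + b • y) i) := by
    refine Finset.sum_congr rfl fun i _ => ?_
    simp only [Pi.add_apply, Pi.smul_apply, smul_eq_mul]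
    have : a = 1 - b := by linarith
    rw [this]; ring_nf
  rw [e0, e1, eb] at hineq
  simpa using hineq

theorem tan_concavity (n : ℕ) (Θhat : ℝ)
    (hΘ1 : ((n : ℝ) - 1) * (π / 2) < Θhat) (hΘ2 : Θhat < (n : ℝ) * (π / 2)) :
    ConcaveOn ℝ {lam : Fin n → ℝ | |(∑ i, Real.arctan (lam i)) - Θhat| < π / 2}
      (fun lam => Real.tan ((∑ i, Real.arctan (lam i)) - Θhat)) := by
  induction n generalizing Θhat with
  | zero =>
    constructor
    · intro p hp q hq a b ha hb hab
      simp only [Set.mem_setOf_eq, univ_eq_empty, Finset.sum_empty] at hp ⊢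
      exact hp
    · intro p hp q hq a b ha hb hab
      simp only [univ_eq_empty, Finset.sum_empty, smul_eq_mul]
      rw [← add_mul, hab, one_mul]
  | succ n ih =>
    refine concave_of_convexS (n + 1) Θhat hΘ1 ?_
    intro lam hlam mu hmu a b ha hb hab
    rcases eq_or_lt_of_le ha with rfl | ha'
    · simp only [zero_add] at hab
      subst hab
      simpa using hmu
    rcases eq_or_lt_of_le hb with rfl | hb'
    · simp only [add_zero] at hab
      subst hab
      simpa using hlam
    -- both positive
    have hπ := pi_pos
    set Θ' := Θhat - π / 2 with hΘ'def
    have hΘ'1 : ((n : ℝ) - 1) * (π / 2) < Θ' := by push_cast at hΘ1; rw [hΘ'def]; linarith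
    have hΘ'2 : Θ' < (n : ℝ) * (π / 2) := by push_cast at hΘ2; rw [hΘ'def]; linarith
    have IH := ih Θ' hΘ'1 hΘ'2
    -- notation
    have hsplit : ∀ w : Fin (n + 1) → ℝ,
        ∑ i, arctan (w i) = (∑ i : Fin n, arctan (w i.castSucc)) + arctan (w (Fin.last n)) :=
      fun w => Fin.sum_univ_castSucc (fun i => arctan (w i))
    have hub : ∀ w : Fin n → ℝ, ∑ i, arctan (w i) ≤ (n : ℝ) * (π / 2) := by
      intro w
      have h1 : ∑ i, arctan (w i) ≤ ∑ _i : Fin n, π / 2 :=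
        Finset.sum_le_sum fun i _ => (arctan_lt_pi_div_two _).le
      have h2 : ∑ _i : Fin n, π / 2 = (n : ℝ) * (π / 2) := by
        rw [Finset.sum_const, Finset.card_univ, Fintype.card_fin, nsmul_eq_mul]
      linarith [h1, le_of_eq h2]
    -- decompose membership
    have hdec : ∀ w : Fin (n + 1) → ℝ,
        |(∑ i, arctan (w i)) - Θhat| < π / 2 →
        (fun i : Fin n => w i.castSucc) ∈
            {z : Fin n → ℝ | |(∑ i, arctan (z i)) - Θ'| < π / 2}
          ∧ -tan ((∑ i : Fin n, arctan (w i.castSucc)) - Θ') < w (Fin.last n) := by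
      intro w hw
      obtain ⟨hw1, hw2⟩ := abs_lt.mp hw
      rw [hsplit w] at hw1 hw2
      have hal1 := neg_pi_div_two_lt_arctan (w (Fin.last n))
      have hal2 := arctan_lt_pi_div_two (w (Fin.last n))
      have hζub := hub (fun i : Fin n => w i.castSucc)
      have hmemS' : |(∑ i : Fin n, arctan (w i.castSucc)) - Θ'| < π / 2 := by
        rw [abs_lt]
        constructor
        · rw [hΘ'def]; linarith
        · rw [hΘ'def]; push_cast at hΘ2; linarith
      refine ⟨hmemS', ?_⟩
      obtain ⟨hm1, hm2⟩ := abs_lt.mp hmemS'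
      have harc : Θ' - (∑ i : Fin n, arctan (w i.castSucc)) < arctan (w (Fin.last n)) := by
        rw [hΘ'def]; linarith
      have := strictMonoOn_tan ⟨by linarith, by linarith⟩
        ⟨hal1, hal2⟩ harc
      rw [tan_arctan] at this
      calc -tan ((∑ i : Fin n, arctan (w i.castSucc)) - Θ')
          = tan (Θ' - ∑ i : Fin n, arctan (w i.castSucc)) := by rw [← tan_neg, neg_sub]
        _ < w (Fin.last n) := this
    obtain ⟨hlamS', hlamlast⟩ := hdec lam hlam
    obtain ⟨hmuS', hmulast⟩ := hdec mu hmu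
    set z := a • lam + b • mu with hzdef
    have hz' : (fun i : Fin n => z i.castSucc)
        = a • (fun i : Fin n => lam i.castSucc) + b • (fun i : Fin n => mu i.castSucc) := by
      funext i
      simp [hzdef]
    have hzS' : (fun i : Fin n => z i.castSucc) ∈
        {p : Fin n → ℝ | |(∑ i, arctan (p i)) - Θ'| < π / 2} := by
      rw [hz']
      exact IH.1 hlamS' hmuS' ha hb hab
    have hconc := IH.2 hlamS' hmuS' ha hb hab
    rw [← hz'] at hconc
    -- numeric bound on last coordinate
    have hzlast : -tan ((∑ i : Fin n, arctan (z i.castSucc)) - Θ') < z (Fin.last n) := by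
      have e1 : z (Fin.last n) = a * lam (Fin.last n) + b * mu (Fin.last n) := by
        simp [hzdef]
      have h1 : a * (-tan ((∑ i : Fin n, arctan (lam i.castSucc)) - Θ'))
          < a * lam (Fin.last n) := by
        exact mul_lt_mul_of_pos_left hlamlast ha'
      have h2 : b * (-tan ((∑ i : Fin n, arctan (mu i.castSucc)) - Θ'))
          < b * mu (Fin.last n) := mul_lt_mul_of_pos_left hmulast hb'
      have h3 : a • tan ((∑ i : Fin n, arctan (lam i.castSucc)) - Θ')
          + b • tan ((∑ i : Fin n, arctan (mu i.castSucc)) - Θ')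
          ≤ tan ((∑ i : Fin n, arctan (z i.castSucc)) - Θ') := hconc
      simp only [smul_eq_mul] at h3
      rw [e1]
      nlinarith [h1, h2, h3]
    -- conclude
    rw [Set.mem_setOf_eq, abs_lt]
    rw [Set.mem_setOf_eq] at hzS'
    obtain ⟨hzm1, hzm2⟩ := abs_lt.mp hzS'
    constructor
    · rw [hsplit z]
      have harc2 : Θ' - (∑ i : Fin n, arctan (z i.castSucc)) < arctan (z (Fin.last n)) := by
        have hbranch1 : -(π/2) < Θ' - (∑ i : Fin n, arctan (z i.castSucc)) := by linarith
        have hbranch2 : Θ' - (∑ i : Fin n, arctan (z i.castSucc)) < π/2 := by linarith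
        have h4 : tan (Θ' - (∑ i : Fin n, arctan (z i.castSucc))) < z (Fin.last n) := by
          rw [← neg_sub, tan_neg]
          exact hzlast
        have h5 := arctan_strictMono h4
        rw [arctan_tan hbranch1 hbranch2] at h5
        exact h5
      rw [hΘ'def] at harc2
      linarith
    · rw [hsplit z]
      have := hub (fun i : Fin n => z i.castSucc)
      have hal2 := arctan_lt_pi_div_two (z (Fin.last n))
      push_cast at hΘ1
      linarith
end

section
/- The convex set fact: if Θ̂ > (n-1)·π/2 and λ, μ ∈ ℝⁿ both satisfy θ(λ) > Θ̂ - π/2 and θ(μ) > Θ̂ - π/2 (where θ(ν) = ∑ᵢ arctan νᵢ), then for every t ∈ [0,1], θ(t·λ + (1-t)·μ) ≥ min(θ(λ), θ(μ)) > Θ̂ - π/2, provided θ takes values above (n-2)·π/2 on the segment; in particular, for n = 1 the function arctan satisfies arctan(t·a + (1-t)·b) ≥ min(arctan a, arctan b) for all reals a, b. -/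
open Real Finset

lemma my_arctan_add_le {u v : ℝ} (hu : 0 ≤ u) (hv : 0 ≤ v) :
    arctan (u + v) ≤ arctan u + arctan v := by
  rcases lt_or_ge (u * v) 1 with h | h
  · rw [Real.arctan_add h]
    apply Real.arctan_strictMono.monotone
    rw [le_div_iff₀ (by nlinarith)]
    nlinarith [mul_nonneg (add_nonneg hu hv) (mul_nonneg hu hv)]
  · have hv' : 0 < v := by nlinarith
    have hu' : 0 < u := by nlinarith
    have h1 : v⁻¹ ≤ u := by
      rw [inv_le_iff_one_le_mul₀ hv']; nlinarith
    have h2 := Real.arctan_inv_of_pos hv'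
    have h3 := Real.arctan_strictMono.monotone h1
    have := Real.arctan_lt_pi_div_two (u + v)
    linarith

lemma my_arctan_sum_le {ι : Type*} [DecidableEq ι] (s : Finset ι) (f : ι → ℝ)
    (hf : ∀ i ∈ s, 0 ≤ f i) :
    arctan (∑ i ∈ s, f i) ≤ ∑ i ∈ s, arctan (f i) := by
  induction s using Finset.induction_on with
  | empty => simp
  | @insert a s' hx ih =>
    rw [Finset.sum_insert hx, Finset.sum_insert hx]
    have h1 : 0 ≤ ∑ i ∈ s', f i := Finset.sum_nonneg fun i hi => hf i (Finset.mem_insert_of_mem hi)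
    calc arctan (f a + ∑ i ∈ s', f i) ≤ arctan (f a) + arctan (∑ i ∈ s', f i) :=
          my_arctan_add_le (hf a (Finset.mem_insert_self a s')) h1
      _ ≤ arctan (f a) + ∑ i ∈ s', arctan (f i) := by
          have := ih fun i hi => hf i (Finset.mem_insert_of_mem hi)
          linarith

lemma my_pair {n : ℕ} (x : Fin n → ℝ) (hx : ((n:ℝ) - 2) * (π/2) < ∑ i, arctan (x i))
    {i j : Fin n} (hij : i ≠ j) : 0 < arctan (x i) + arctan (x j) := by
  have hsub : ({i, j} : Finset (Fin n)) ⊆ univ := Finset.subset_univ _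
  have hsplit := Finset.sum_sdiff (f := fun k => arctan (x k)) hsub
  have hpairsum : ∑ k ∈ ({i, j} : Finset (Fin n)), arctan (x k)
      = arctan (x i) + arctan (x j) := Finset.sum_pair hij
  have hcard2 : ({i, j} : Finset (Fin n)).card = 2 := Finset.card_pair hij
  have hn2 : 2 ≤ n := by
    have := Finset.card_le_card hsub
    simpa [hcard2] using this
  have hcards : (univ \ ({i, j} : Finset (Fin n))).card = n - 2 := by
    rw [Finset.card_sdiff_of_subset hsub, hcard2, Finset.card_univ, Fintype.card_fin]
  have hbound : ∑ k ∈ univ \ ({i, j} : Finset (Fin n)), arctan (x k)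
      ≤ ((n : ℝ) - 2) * (π/2) := by
    have h1 := Finset.sum_le_card_nsmul (univ \ ({i, j} : Finset (Fin n)))
      (fun k => arctan (x k)) (π/2) (fun k _ => (Real.arctan_lt_pi_div_two _).le)
    rw [hcards, nsmul_eq_mul] at h1
    rwa [Nat.cast_sub hn2, Nat.cast_ofNat] at h1
  linarith [hsplit ▸ hx]

lemma my_key {n : ℕ} (x b : Fin n → ℝ)
    (hx : ((n:ℝ) - 2) * (π/2) < ∑ i, arctan (x i))
    (hb0 : ∑ i, b i = 0) (hbne : ∃ i, b i ≠ 0) :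
    0 < ∑ i, b i ^ 2 * x i := by
  by_cases hneg : ∃ i, x i < 0
  case neg =>
    push_neg at hneg
    obtain ⟨i₀, hi₀⟩ := hbne
    have hterm : ∀ i ∈ (univ : Finset (Fin n)), 0 ≤ b i ^ 2 * x i :=
      fun i _ => mul_nonneg (sq_nonneg _) (hneg i)
    rcases lt_or_eq_of_le (hneg i₀) with hpos | hz
    · exact Finset.sum_pos' hterm ⟨i₀, Finset.mem_univ _,
        mul_pos (by positivity) hpos⟩
    · -- x i₀ = 0; find j ≠ i₀ with b j ≠ 0
      have hsum : b i₀ + ∑ j ∈ univ.erase i₀, b j = 0 := by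
        rw [Finset.add_sum_erase _ _ (Finset.mem_univ i₀)]; exact hb0
      have hex : ∃ j ∈ univ.erase i₀, b j ≠ 0 := by
        by_contra hc
        push_neg at hc
        have : ∑ j ∈ univ.erase i₀, b j = 0 := Finset.sum_eq_zero hc
        rw [this, add_zero] at hsum
        exact hi₀ hsum
      obtain ⟨j, hjmem, hbj⟩ := hex
      have hjne : j ≠ i₀ := (Finset.mem_erase.mp hjmem).1
      have hxj : 0 < x j := by
        have := my_pair x hx hjne
        rw [← hz, Real.arctan_zero, add_zero, ← Real.arctan_zero] at this
        exact Real.arctan_strictMono.lt_iff_lt.mp this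
      exact Finset.sum_pos' hterm ⟨j, Finset.mem_univ _, mul_pos (by positivity) hxj⟩
  case pos =>
    obtain ⟨i₁, hi₁⟩ := hneg
    set t : ℝ := -x i₁ with ht_def
    have ht : 0 < t := by simp [ht_def]; linarith
    set s : Finset (Fin n) := univ.erase i₁ with hs_def
    have hxj : ∀ j ∈ s, t < x j := by
      intro j hj
      have hjne : j ≠ i₁ := (Finset.mem_erase.mp hj).1
      have := my_pair x hx hjne
      have h2 : arctan t < arctan (x j) := by
        rw [ht_def, Real.arctan_neg]; linarith
      exact Real.arctan_strictMono.lt_iff_lt.mp h2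
    have hxjpos : ∀ j ∈ s, 0 < x j := fun j hj => ht.trans (hxj j hj)
    have hb1 : b i₁ = -∑ j ∈ s, b j := by
      have : b i₁ + ∑ j ∈ s, b j = 0 := by
        rw [hs_def, Finset.add_sum_erase _ _ (Finset.mem_univ i₁)]; exact hb0
      linarith
    set Sx : ℝ := ∑ j ∈ s, b j ^ 2 * x j with hSx_def
    set Sinv : ℝ := ∑ j ∈ s, (x j)⁻¹ with hSinv_def
    have hSxnn : 0 ≤ Sx := Finset.sum_nonneg fun j hj =>
      mul_nonneg (sq_nonneg _) (hxjpos j hj).le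
    have hSx : 0 < Sx := by
      rcases lt_or_eq_of_le hSxnn with h | h
      · exact h
      · exfalso
        have hall : ∀ j ∈ s, b j ^ 2 * x j = 0 :=
          (Finset.sum_eq_zero_iff_of_nonneg fun j hj =>
            mul_nonneg (sq_nonneg _) (hxjpos j hj).le).mp h.symm
        have hbz : ∀ j ∈ s, b j = 0 := by
          intro j hj
          have := hall j hj
          have hx' := (hxjpos j hj).ne'
          have : b j ^ 2 = 0 := by
            rcases mul_eq_zero.mp this with h' | h'
            · exact h'
            · exact absurd h' hx'
          exact pow_eq_zero_iff (by norm_num) |>.mp this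
        have hb1z : b i₁ = 0 := by rw [hb1, Finset.sum_eq_zero hbz, neg_zero]
        obtain ⟨i₀, hi₀⟩ := hbne
        rcases eq_or_ne i₀ i₁ with rfl | hne
        · exact hi₀ hb1z
        · exact hi₀ (hbz i₀ (Finset.mem_erase.mpr ⟨hne, Finset.mem_univ _⟩))
    have hSinvnn : 0 ≤ Sinv := Finset.sum_nonneg fun j hj => (inv_nonneg).mpr (hxjpos j hj).le
    -- t * Sinv < 1
    have hts : t * Sinv < 1 := by
      have hcards : s.card = n - 1 := by
        rw [hs_def, Finset.card_erase_of_mem (Finset.mem_univ _), Finset.card_univ,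
          Fintype.card_fin]
      have hn1 : 1 ≤ n := Nat.one_le_iff_ne_zero.mpr (by rintro rfl; exact i₁.elim0)
      have hinv : ∀ j ∈ s, arctan (x j)⁻¹ = π/2 - arctan (x j) :=
        fun j hj => Real.arctan_inv_of_pos (hxjpos j hj)
      have hsum1 : ∑ j ∈ s, arctan (x j)⁻¹
          = ((n:ℝ) - 1) * (π/2) - ∑ j ∈ s, arctan (x j) := by
        rw [Finset.sum_congr rfl hinv, Finset.sum_sub_distrib, Finset.sum_const, hcards,
          nsmul_eq_mul, Nat.cast_sub hn1, Nat.cast_one]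
      have hsplit : arctan (x i₁) + ∑ j ∈ s, arctan (x j) = ∑ i, arctan (x i) := by
        rw [hs_def]; exact Finset.add_sum_erase _ (fun k => arctan (x k)) (Finset.mem_univ i₁)
      have harci : arctan (x i₁) = -arctan t := by
        rw [ht_def, Real.arctan_neg, neg_neg]
      have hlt : ∑ j ∈ s, arctan (x j)⁻¹ < arctan t⁻¹ := by
        rw [Real.arctan_inv_of_pos ht, hsum1]
        have : ((n:ℝ) - 2) * (π/2) < -arctan t + ∑ j ∈ s, arctan (x j) := by
          rw [← harci, hsplit]; exact hx
        linarith
      have hA : arctan Sinv ≤ ∑ j ∈ s, arctan (x j)⁻¹ :=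
        my_arctan_sum_le s _ (fun j hj => (inv_nonneg).mpr (hxjpos j hj).le)
      have hSinvlt : Sinv < t⁻¹ :=
        Real.arctan_strictMono.lt_iff_lt.mp (lt_of_le_of_lt hA hlt)
      calc t * Sinv < t * t⁻¹ := by
            exact mul_lt_mul_of_pos_left hSinvlt ht
        _ = 1 := mul_inv_cancel₀ ht.ne'
    -- Cauchy-Schwarz
    have hCS : (∑ j ∈ s, b j) ^ 2 ≤ Sx * Sinv := by
      have h := Finset.sum_mul_sq_le_sq_mul_sq s (fun j => b j * Real.sqrt (x j))
        (fun j => (Real.sqrt (x j))⁻¹)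
      have e1 : ∀ j ∈ s, b j * Real.sqrt (x j) * (Real.sqrt (x j))⁻¹ = b j := by
        intro j hj
        have : Real.sqrt (x j) ≠ 0 := by
          rw [Real.sqrt_ne_zero' ]; exact hxjpos j hj
        field_simp
      have e2 : ∀ j ∈ s, (b j * Real.sqrt (x j)) ^ 2 = b j ^ 2 * x j := by
        intro j hj
        rw [mul_pow, Real.sq_sqrt (hxjpos j hj).le]
      have e3 : ∀ j ∈ s, ((Real.sqrt (x j))⁻¹) ^ 2 = (x j)⁻¹ := by
        intro j hj
        rw [inv_pow, Real.sq_sqrt (hxjpos j hj).le]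
      rw [Finset.sum_congr rfl e1, Finset.sum_congr rfl e2, Finset.sum_congr rfl e3] at h
      exact h
    have hbsq : b i₁ ^ 2 = (∑ j ∈ s, b j) ^ 2 := by rw [hb1, neg_sq]
    have hkey : b i₁ ^ 2 * t < Sx := by
      calc b i₁ ^ 2 * t ≤ Sx * Sinv * t := by
            rw [hbsq]; exact mul_le_mul_of_nonneg_right hCS ht.le
        _ = Sx * (t * Sinv) := by ring
        _ < Sx * 1 := mul_lt_mul_of_pos_left hts hSx
        _ = Sx := mul_one Sx
    have hsplit2 : ∑ i, b i ^ 2 * x i = b i₁ ^ 2 * x i₁ + Sx := by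
      rw [hSx_def, hs_def]; exact (Finset.add_sum_erase _ (fun k => b k ^ 2 * x k) (Finset.mem_univ i₁)).symm
    rw [hsplit2]
    have : x i₁ = -t := by rw [ht_def, neg_neg]
    rw [this]
    nlinarith [hkey]

theorem almost_calibrated_convex (n : ℕ) (Θhat : ℝ)
    (hΘ : ((n : ℝ) - 1) * (π / 2) < Θhat)
    (lam mu : Fin n → ℝ)
    (hlam : Θhat - π / 2 < ∑ i, Real.arctan (lam i))
    (hmu : Θhat - π / 2 < ∑ i, Real.arctan (mu i))
    (hseg : ∀ t ∈ Set.Icc (0 : ℝ) 1,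
      ((n : ℝ) - 2) * (π / 2) < ∑ i, Real.arctan (t * lam i + (1 - t) * mu i)) :
    (∀ t ∈ Set.Icc (0 : ℝ) 1,
      min (∑ i, Real.arctan (lam i)) (∑ i, Real.arctan (mu i))
        ≤ ∑ i, Real.arctan (t * lam i + (1 - t) * mu i) ∧
      Θhat - π / 2 < ∑ i, Real.arctan (t * lam i + (1 - t) * mu i)) ∧
    (∀ a b : ℝ, ∀ t ∈ Set.Icc (0 : ℝ) 1,
      min (Real.arctan a) (Real.arctan b) ≤ Real.arctan (t * a + (1 - t) * b)) := by
  constructor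
  · -- main part
    set g : ℝ → ℝ := fun t => ∑ i, arctan (t * lam i + (1 - t) * mu i) with hg_def
    set g1 : ℝ → ℝ := fun t => ∑ i, (lam i - mu i) / (1 + (t * lam i + (1 - t) * mu i) ^ 2)
      with hg1_def
    have hder : ∀ (i : Fin n) (t : ℝ),
        HasDerivAt (fun t : ℝ => t * lam i + (1 - t) * mu i) (lam i - mu i) t := by
      intro i t
      have h := ((hasDerivAt_id t).mul_const (lam i)).fun_add
        (((hasDerivAt_const t (1 : ℝ)).fun_sub (hasDerivAt_id t)).mul_const (mu i))
      refine h.congr_deriv ?_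
      ring
    have hgd : ∀ t, HasDerivAt g (g1 t) t := by
      intro t
      have h := HasDerivAt.fun_sum (fun i (_ : i ∈ (univ : Finset (Fin n))) =>
        (Real.hasDerivAt_arctan _).comp t (hder i t))
      refine h.congr_deriv ?_
      rw [hg1_def]
      exact Finset.sum_congr rfl (fun i _ => by ring)
    have hgc : Continuous g := by
      apply continuous_finset_sum
      intro i _
      exact Real.continuous_arctan.comp (by continuity)
    have hG1 : g 1 = ∑ i, arctan (lam i) := by
      rw [hg_def]; norm_num
    have hG0 : g 0 = ∑ i, arctan (mu i) := by
      rw [hg_def]; norm_num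
    have key : ∀ t₀ ∈ Set.Icc (0 : ℝ) 1,
        min (∑ i, arctan (lam i)) (∑ i, arctan (mu i)) ≤ g t₀ := by
      by_contra hcon
      push_neg at hcon
      obtain ⟨t₀, ht₀, hlt⟩ := hcon
      obtain ⟨ts, hts_mem, hts_min⟩ := isCompact_Icc.exists_isMinOn
        (Set.nonempty_Icc.mpr zero_le_one) hgc.continuousOn
      have h0 : g ts ≤ g t₀ := hts_min ht₀
      have hlt1 : g ts < g 1 := by
        rw [hG1]; exact lt_of_le_of_lt h0 (lt_of_lt_of_le hlt (min_le_left _ _))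
      have hlt0 : g ts < g 0 := by
        rw [hG0]; exact lt_of_le_of_lt h0 (lt_of_lt_of_le hlt (min_le_right _ _))
      have hts_ioo : ts ∈ Set.Ioo (0 : ℝ) 1 := by
        obtain ⟨h1, h2⟩ := hts_mem
        constructor
        · rcases eq_or_lt_of_le h1 with h | h
          · exact absurd (h ▸ hlt0) (lt_irrefl _)
          · exact h
        · rcases eq_or_lt_of_le h2 with h | h
          · exact absurd (h ▸ hlt1) (lt_irrefl _)
          · exact h
      have hloc : IsLocalMin g ts := hts_min.isLocalMin (Icc_mem_nhds hts_ioo.1 hts_ioo.2)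
      have hcrit : g1 ts = 0 := hloc.hasDerivAt_eq_zero (hgd ts)
      set x : Fin n → ℝ := fun i => ts * lam i + (1 - ts) * mu i with hx_def
      set b : Fin n → ℝ := fun i => (lam i - mu i) / (1 + x i ^ 2) with hb_def
      have hb0 : ∑ i, b i = 0 := hcrit
      by_cases hbz : ∃ i, b i ≠ 0
      · -- nondegenerate: strict local max behaviour, contradiction
        have hK : 0 < ∑ i, b i ^ 2 * x i := my_key x b (hseg ts hts_mem) hb0 hbz
        have hg2 : HasDerivAt g1 (-2 * ∑ i, b i ^ 2 * x i) ts := by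
          have hterm : ∀ i : Fin n, HasDerivAt
              (fun t : ℝ => (lam i - mu i) / (1 + (t * lam i + (1 - t) * mu i) ^ 2))
              (-2 * (b i ^ 2 * x i)) ts := by
            intro i
            have hden : HasDerivAt (fun t : ℝ => 1 + (t * lam i + (1 - t) * mu i) ^ 2)
                (((2 : ℕ) : ℝ) * (ts * lam i + (1 - ts) * mu i) ^ (2 - 1) * (lam i - mu i)) ts := by
              have h' := (hasDerivAt_const ts (1 : ℝ)).fun_add ((hder i ts).fun_pow 2)
              simpa using h'
            have hne : (1 : ℝ) + (ts * lam i + (1 - ts) * mu i) ^ 2 ≠ 0 := by positivity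
            have h := (hasDerivAt_const ts (lam i - mu i)).div hden hne
            refine h.congr_deriv ?_
            rw [hb_def, hx_def]
            simp only
            field_simp
            ring
          have h := HasDerivAt.fun_sum (fun i (_ : i ∈ (univ : Finset (Fin n))) => hterm i)
          refine h.congr_deriv ?_
          rw [Finset.mul_sum]
        have hneg2 : -2 * ∑ i, b i ^ 2 * x i < 0 := by linarith
        have hslope := hasDerivAt_iff_tendsto_slope.mp hg2
        have hev : ∀ᶠ s in nhdsWithin ts {ts}ᶜ, slope g1 ts s < 0 :=
          hslope.eventually_lt_const hneg2
        rw [eventually_nhdsWithin_iff] at hev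
        obtain ⟨ε, hε, hball⟩ := Metric.eventually_nhds_iff.mp hev
        set u := min (ts + ε / 2) ((ts + 1) / 2) with hu_def
        have hu1 : ts < u := lt_min (by linarith) (by linarith [hts_ioo.2])
        have hu2 : u < 1 := lt_of_le_of_lt (min_le_right _ _) (by linarith [hts_ioo.2])
        have hu3 : u - ts < ε := by
          have := min_le_left (ts + ε / 2) ((ts + 1) / 2)
          rw [← hu_def] at this
          linarith
        have hanti : StrictAntiOn g (Set.Icc ts u) := by
          apply strictAntiOn_of_deriv_neg (convex_Icc _ _) hgc.continuousOn
          intro s hs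
          rw [interior_Icc] at hs
          have hs1 : s - ts > 0 := sub_pos.mpr hs.1
          have hd : dist s ts < ε := by
            rw [Real.dist_eq, abs_of_pos hs1]; linarith [hs.2]
          have hsl := hball hd (Set.mem_compl_singleton_iff.mpr (ne_of_gt hs.1))
          have hslope_eq : slope g1 ts s = g1 s / (s - ts) := by
            rw [slope_def_field, hcrit, sub_zero]
          rw [hslope_eq] at hsl
          have hg1s : g1 s < 0 := by
            have := (div_lt_iff₀ hs1).mp hsl
            linarith
          rw [(hgd s).deriv]
          exact hg1s
        have hfinal : g u < g ts :=
          hanti (Set.left_mem_Icc.mpr hu1.le) (Set.right_mem_Icc.mpr hu1.le) hu1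
        have : g ts ≤ g u := hts_min ⟨by linarith [hts_ioo.1], hu2.le⟩
        linarith
      · -- all b i = 0, hence lam = mu
        push_neg at hbz
        have hlm : ∀ i, lam i = mu i := by
          intro i
          have h := hbz i
          rw [hb_def] at h
          simp only at h
          have hne : (1 : ℝ) + x i ^ 2 ≠ 0 := by positivity
          have := (div_eq_zero_iff.mp h).resolve_right hne
          linarith
        have : g t₀ = g 0 := by
          rw [hg_def]
          simp only
          apply Finset.sum_congr rfl
          intro i _
          rw [hlm i]
          ring_nf
        rw [this, hG0] at hlt
        exact absurd hlt (not_lt.mpr (min_le_right _ _))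
    intro t ht
    refine ⟨key t ht, ?_⟩
    exact lt_of_lt_of_le (lt_min hlam hmu) (key t ht)
  · -- n = 1 style statement
    intro a b t ht
    obtain ⟨h0, h1⟩ := ht
    have hmin : min a b ≤ t * a + (1 - t) * b := by
      nlinarith [mul_nonneg h0 (sub_nonneg.mpr (min_le_left a b)),
        mul_nonneg (by linarith : (0 : ℝ) ≤ 1 - t) (sub_nonneg.mpr (min_le_right a b))]
    calc min (arctan a) (arctan b) = arctan (min a b) :=
          (Real.arctan_strictMono.monotone.map_min).symm
      _ ≤ arctan (t * a + (1 - t) * b) := Real.arctan_strictMono.monotone hmin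
end
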